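/- arXiv:2302.00491 — 3 statements merged into one kernel-verified Lean document; each statement's English description precedes it below -/
import Mathlib

section
/- Let d, K be positive integers, x ∈ ℝ^d, prototypes c_1,…,c_K ∈ ℝ^d with x ≠ c_z for every z, posterior p(z|x) = exp(−½‖x−c_z‖) / Σ_{z'} exp(−½‖x−c_{z'}‖), and loss L_{xy} = −log p(y|x). Then the Euclidean norm of the gradient of L_{xy} with respect to the label's own prototype c_y equals ½·(1 − p(y|x)), i.e., it is proportional to the misclassification probability of the sample and independent of the distance ‖x − c_y‖. -/
/-!
Only the logit of the own class depends on `c_y`, and it does so through the distance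
`t = ‖x - c_y‖`. Hence the loss is `φ (‖x - w‖)` with
`φ t = t / 2 + log (exp (-t / 2) + S)`, `S` collecting the other classes, and its gradient is
`φ' t` times the unit vector `(c_y - x) / ‖x - c_y‖`. Its norm is `|φ' t| = ½ (1 - p(y|x))`.
-/

open Real Finset

theorem Fintype.sum_apply_update {ι α M : Type*} [Fintype ι] [DecidableEq ι] [AddCommMonoid M]
    (g : α → M) (c : ι → α) (i : ι) (v : α) :
    ∑ j, g (Function.update c i v j) = g v + ∑ j ∈ {i}ᶜ, g (c j) := by
  change ∑ j, (g ∘ Function.update c i v) j = _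
  rw [Function.comp_update, sum_update_of_mem (mem_univ i), compl_eq_univ_sdiff]
  rfl

section NormGradient

variable {E : Type*} [NormedAddCommGroup E] [InnerProductSpace ℝ E]

theorem hasStrictFDerivAt_norm {v : E} (hv : v ≠ 0) :
    HasStrictFDerivAt (‖·‖) (‖v‖⁻¹ • innerSL ℝ v) v := by
  have hsqrt := (hasStrictFDerivAt_norm_sq v).sqrt (by simpa using hv)
  simp only [sqrt_sq (norm_nonneg _)] at hsqrt
  convert hsqrt using 1
  rw [← Nat.cast_smul_eq_nsmul ℝ, smul_smul]
  congr 1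
  field_simp
  norm_num

theorem norm_gradient_comp_norm_sub [CompleteSpace E] {φ : ℝ → ℝ} {φ' : ℝ} {x u : E}
    (hxu : x ≠ u) (hφ : HasDerivAt φ φ' ‖x - u‖) :
    ‖gradient (fun w => φ ‖x - w‖) u‖ = |φ'| := by
  have hv : x - u ≠ 0 := sub_ne_zero.2 hxu
  have hdist : HasFDerivAt (fun w => ‖x - w‖) (-(‖x - u‖⁻¹ • innerSL ℝ (x - u))) u :=
    ((hasStrictFDerivAt_norm hv).hasFDerivAt.comp u ((hasFDerivAt_id u).const_sub x)).congr_fderiv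
      (by ext; simp)
  have hcomp : HasFDerivAt (fun w => φ ‖x - w‖) (φ' • -(‖x - u‖⁻¹ • innerSL ℝ (x - u))) u :=
    hφ.comp_hasFDerivAt u hdist
  rw [gradient, LinearIsometryEquiv.norm_map, hcomp.fderiv, norm_smul,
    norm_neg, norm_smul, innerSL_apply_norm, norm_inv, norm_norm,
    inv_mul_cancel₀ (norm_ne_zero_iff.2 hv), mul_one, norm_eq_abs]

end NormGradient

theorem hasDerivAt_neg_log_exp_div_exp_add {a S : ℝ} (hS : 0 ≤ S) (t : ℝ) :
    HasDerivAt (fun t => -log (exp (-a * t) / (exp (-a * t) + S)))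
      (a * (1 - exp (-a * t) / (exp (-a * t) + S))) t := by
  have hfun : (fun t => -log (exp (-a * t) / (exp (-a * t) + S)))
      = fun t => a * t + log (exp (-a * t) + S) := by
    funext t
    rw [log_div (exp_pos _).ne' (by positivity), log_exp]
    ring
  have hlin : HasDerivAt (fun t => a * t) a t := by
    simpa using (hasDerivAt_id' t).const_mul a
  have hlog : HasDerivAt (fun t => log (exp (-a * t) + S))
      (exp (-a * t) * -a / (exp (-a * t) + S)) t := by
    simpa using (((hasDerivAt_id' t).const_mul (-a)).exp.add_const S).log (by positivity)
  rw [hfun]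
  refine (hlin.add hlog).congr_deriv ?_
  field_simp
  ring

theorem prototype_gradient_norm_own_class_general
    (d K : ℕ)
    (x : EuclideanSpace ℝ (Fin d)) (c : Fin K → EuclideanSpace ℝ (Fin d))
    (hx : ∀ z, x ≠ c z) (y : Fin K)
    (p : Fin K → ℝ)
    (hp : ∀ z, p z =
      Real.exp (-(1 / 2) * ‖x - c z‖) / ∑ z', Real.exp (-(1 / 2) * ‖x - c z'‖)) :
    ‖gradient (fun w : EuclideanSpace ℝ (Fin d) =>
        -Real.log (Real.exp (-(1 / 2) * ‖x - Function.update c y w y‖) /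
          ∑ z', Real.exp (-(1 / 2) * ‖x - Function.update c y w z'‖))) (c y)‖
      = (1 / 2) * (1 - p y) := by
  set S := ∑ z ∈ {y}ᶜ, exp (-(1 / 2) * ‖x - c z‖)
  have hS : 0 ≤ S := sum_nonneg fun _ _ => (exp_pos _).le
  have hloss : (fun w : EuclideanSpace ℝ (Fin d) =>
        -log (exp (-(1 / 2) * ‖x - Function.update c y w y‖) /
          ∑ z', exp (-(1 / 2) * ‖x - Function.update c y w z'‖)))
      = fun w => (fun t => -log (exp (-(1 / 2) * t) / (exp (-(1 / 2) * t) + S))) ‖x - w‖ := by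
    funext w
    rw [Function.update_self, Fintype.sum_apply_update (fun v => exp (-(1 / 2) * ‖x - v‖))]
  have hpy : p y = exp (-(1 / 2) * ‖x - c y‖) / (exp (-(1 / 2) * ‖x - c y‖) + S) := by
    rw [hp, Fintype.sum_eq_add_sum_compl y]
  have hpy_le : p y ≤ 1 := hpy ▸ div_le_one_of_le₀ (le_add_of_nonneg_right hS) (by positivity)
  rw [hloss, norm_gradient_comp_norm_sub (hx y) (hasDerivAt_neg_log_exp_div_exp_add hS _), ← hpy,
    abs_of_nonneg (by linarith)]

/-- For the Euclidean-distance prototype classifier, the Euclidean norm of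
the gradient of the NLL loss `L_{xy}` with respect to the label's own prototype `c_y`
equals `½ (1 - p(y|x))`: it is proportional to the misclassification probability and
independent of the distance `‖x - c_y‖`. -/
theorem prototype_gradient_norm_own_class
    (d K : ℕ) (hd : 0 < d) (hK : 0 < K)
    (x : EuclideanSpace ℝ (Fin d)) (c : Fin K → EuclideanSpace ℝ (Fin d))
    (hx : ∀ z, x ≠ c z) (y : Fin K)
    (p : Fin K → ℝ)
    (hp : ∀ z, p z =
      Real.exp (-(1 / 2) * ‖x - c z‖) / ∑ z', Real.exp (-(1 / 2) * ‖x - c z'‖)) :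
    ‖gradient (fun w : EuclideanSpace ℝ (Fin d) =>
        -Real.log (Real.exp (-(1 / 2) * ‖x - Function.update c y w y‖) /
          ∑ z', Real.exp (-(1 / 2) * ‖x - Function.update c y w z'‖))) (c y)‖
      = (1 / 2) * (1 - p y) :=
  prototype_gradient_norm_own_class_general d K x c hx y p hp
end

section
/- Let d, K be positive integers, x ∈ ℝ^d, prototypes c_1,…,c_K ∈ ℝ^d with x ≠ c_z for every z, posterior p(z|x) = exp(−½‖x−c_z‖) / Σ_{z'} exp(−½‖x−c_{z'}‖), and loss L_{xy} = −log p(y|x). Then for every class z ≠ y, the Euclidean norm of the gradient of L_{xy} with respect to c_z equals ½·p(z|x), and in particular is independent of the distance ‖x − c_z‖. -/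
open Real BigOperators

/-!
Only the `z`-th logit depends on `c_z`, and for `z ≠ y` the loss is
`log (exp (-½ ‖x - c_z‖) + S) + const` with `S` the sum of the other exponentials. So as a
function of `c_z` it is radial around `x`: it has the form `g ‖x - c_z‖`, whose gradient is
`g'(‖x - c_z‖)` times a unit vector. Here `g'(r) = -½ · exp (-½ r) / (exp (-½ r) + S) = -½ p(z|x)`.
-/

section RadialGradient

variable {F : Type*} [NormedAddCommGroup F] [InnerProductSpace ℝ F] [CompleteSpace F]

theorem hasGradientAt_norm_sub {x v : F} (h : x ≠ v) :
    HasGradientAt (fun w => ‖x - w‖) (‖x - v‖⁻¹ • (v - x)) v := by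
  have hr : ‖x - v‖ ≠ 0 := norm_ne_zero_iff.mpr (sub_ne_zero.mpr h)
  have hsqrt := ((hasFDerivAt_id v).const_sub x).norm_sq.sqrt (pow_ne_zero 2 hr)
  simp only [Real.sqrt_sq (norm_nonneg _), id] at hsqrt
  rw [hasGradientAt_iff_hasFDerivAt]
  refine hsqrt.congr_fderiv ?_
  ext u
  simp only [one_div, mul_inv_rev, map_sub, ContinuousLinearMap.comp_neg,
    ContinuousLinearMap.comp_id, neg_sub, smul_apply, sub_apply, coe_innerSL_apply, nsmul_eq_mul,
    Nat.cast_ofNat, smul_eq_mul, map_smul, InnerProductSpace.toDual_apply_apply]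
  field_simp

theorem HasDerivAt.hasGradientAt_comp_norm_sub {g : ℝ → ℝ} {g' : ℝ} {x v : F} (h : x ≠ v)
    (hg : HasDerivAt g g' ‖x - v‖) :
    HasGradientAt (fun w => g ‖x - w‖) ((g' * ‖x - v‖⁻¹) • (v - x)) v := by
  rw [hasGradientAt_iff_hasFDerivAt, mul_smul, map_smul]
  exact hg.comp_hasFDerivAt v (hasGradientAt_norm_sub h).hasFDerivAt

theorem HasDerivAt.norm_gradient_comp_norm_sub {g : ℝ → ℝ} {g' : ℝ} {x v : F} (h : x ≠ v)
    (hg : HasDerivAt g g' ‖x - v‖) :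
    ‖gradient (fun w => g ‖x - w‖) v‖ = |g'| := by
  have hr : ‖x - v‖ ≠ 0 := norm_ne_zero_iff.mpr (sub_ne_zero.mpr h)
  rw [(hg.hasGradientAt_comp_norm_sub h).gradient, norm_smul, norm_sub_rev v, Real.norm_eq_abs,
    abs_mul, abs_inv, abs_norm, inv_mul_cancel_right₀ hr]

end RadialGradient

theorem neg_log_softmax {ι : Type*} [Fintype ι] (s : ι → ℝ) (y : ι) :
    -log (exp (s y) / ∑ i, exp (s i)) = log (∑ i, exp (s i)) - s y := by
  have hpos : 0 < ∑ i, exp (s i) :=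
    Finset.sum_pos (fun i _ => exp_pos _) ⟨y, Finset.mem_univ y⟩
  rw [log_div (exp_ne_zero _) hpos.ne', log_exp]
  ring

theorem Fintype.sum_comp_update {ι E M : Type*} [Fintype ι] [DecidableEq ι] [AddCommMonoid M]
    (f : E → M) (c : ι → E) (z : ι) (w : E) :
    ∑ i, f (Function.update c z w i) = f w + ∑ i ∈ Finset.univ \ {z}, f (c i) := by
  rw [Finset.sum_congr rfl fun i _ => Function.apply_update (fun _ => f) c z w i,
    Finset.sum_update_of_mem (Finset.mem_univ z)]

theorem hasDerivAt_log_exp_mul_add {S : ℝ} (hS : 0 ≤ S) (a t : ℝ) :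
    HasDerivAt (fun t => log (exp (a * t) + S)) (a * (exp (a * t) / (exp (a * t) + S))) t := by
  have hpos : 0 < exp (a * t) + S := by positivity
  exact ((((hasDerivAt_id' t).const_mul a).exp.add_const S).log hpos.ne').congr_deriv (by ring)

theorem prototype_gradient_norm_other_class_general
    (d K : ℕ)
    (x : EuclideanSpace ℝ (Fin d)) (c : Fin K → EuclideanSpace ℝ (Fin d))
    (hx : ∀ z, x ≠ c z) (y : Fin K)
    (p : Fin K → ℝ)
    (hp : ∀ z, p z =
      Real.exp (-(1 / 2) * ‖x - c z‖) / ∑ z', Real.exp (-(1 / 2) * ‖x - c z'‖))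
    (z : Fin K) (hzy : z ≠ y) :
    ‖gradient (fun w : EuclideanSpace ℝ (Fin d) =>
        -Real.log (Real.exp (-(1 / 2) * ‖x - Function.update c z w y‖) /
          ∑ z', Real.exp (-(1 / 2) * ‖x - Function.update c z w z'‖))) (c z)‖
      = (1 / 2) * p z := by
  set S := ∑ i ∈ Finset.univ \ {z}, exp (-(1 / 2) * ‖x - c i‖)
  have hS : 0 ≤ S := Finset.sum_nonneg fun _ _ => (exp_pos _).le
  have hloss : (fun w : EuclideanSpace ℝ (Fin d) =>
        -log (exp (-(1 / 2) * ‖x - Function.update c z w y‖) /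
          ∑ z', exp (-(1 / 2) * ‖x - Function.update c z w z'‖))) =
      fun w => (fun t => log (exp (-(1 / 2) * t) + S) - -(1 / 2) * ‖x - c y‖) ‖x - w‖ := by
    funext w
    rw [neg_log_softmax (fun i => -(1 / 2) * ‖x - Function.update c z w i‖),
      Fintype.sum_comp_update (fun v => exp (-(1 / 2) * ‖x - v‖)), Function.update_of_ne hzy.symm]
  have hsum : ∑ i, exp (-(1 / 2) * ‖x - c i‖) = exp (-(1 / 2) * ‖x - c z‖) + S := by
    rw [← Fintype.sum_comp_update (fun v => exp (-(1 / 2) * ‖x - v‖)) c z (c z),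
      Function.update_eq_self]
  rw [hloss, ((hasDerivAt_log_exp_mul_add hS _ _).sub_const _).norm_gradient_comp_norm_sub (hx z),
    hp, hsum, abs_mul, abs_of_nonneg (by positivity : 0 ≤ exp (-(1 / 2) * ‖x - c z‖) / _)]
  norm_num

/-- For the Euclidean-distance prototype classifier, for every class
`z ≠ y` the Euclidean norm of the gradient of the NLL loss `L_{xy}` with respect to
`c_z` equals `½ p(z|x)`, independent of the distance `‖x - c_z‖`. -/
theorem prototype_gradient_norm_other_class
    (d K : ℕ) (hd : 0 < d) (hK : 0 < K)
    (x : EuclideanSpace ℝ (Fin d)) (c : Fin K → EuclideanSpace ℝ (Fin d))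
    (hx : ∀ z, x ≠ c z) (y : Fin K)
    (p : Fin K → ℝ)
    (hp : ∀ z, p z =
      Real.exp (-(1 / 2) * ‖x - c z‖) / ∑ z', Real.exp (-(1 / 2) * ‖x - c z'‖))
    (z : Fin K) (hzy : z ≠ y) :
    ‖gradient (fun w : EuclideanSpace ℝ (Fin d) =>
        -Real.log (Real.exp (-(1 / 2) * ‖x - Function.update c z w y‖) /
          ∑ z', Real.exp (-(1 / 2) * ‖x - Function.update c z w z'‖))) (c z)‖
      = (1 / 2) * p z :=
  prototype_gradient_norm_other_class_general d K x c hx y p hp z hzy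
end

section
/- Let d, K be positive integers, x ∈ ℝ^d, prototypes c_1,…,c_K ∈ ℝ^d with x ≠ c_z for every z, posterior p(z|x) = exp(−½‖x−c_z‖) / Σ_{z'} exp(−½‖x−c_{z'}‖), and loss L_{xy} = −log p(y|x). Then for every class z, the Euclidean norm of the gradient of L_{xy} with respect to c_z is at most ½; in particular the gradient norm is uniformly bounded over all samples x ∈ ℝ^d (robustness to outliers). -/
/-! As a function of the logit `t = -½‖x - c z‖`, the loss is `log (eᵗ + A) - [y = z] t` up to
a constant, with `A ≥ 0`. Its derivative `eᵗ / (eᵗ + A) - [y = z]` lies in `[-1, 1]`, and the logit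
is `½`-Lipschitz in `c z`, so the loss is `½`-Lipschitz in `c z`. A `C`-Lipschitz function has
gradient of norm at most `C` everywhere (where it is not differentiable, `gradient` is `0`). -/

open Real Finset Function

theorem norm_gradient_le_of_lipschitzWith {F : Type*} [NormedAddCommGroup F]
    [InnerProductSpace ℝ F] [CompleteSpace F] {f : F → ℝ} {C : NNReal}
    (hf : LipschitzWith C f) (x : F) : ‖gradient f x‖ ≤ C := by
  rw [gradient, LinearIsometryEquiv.norm_map]
  exact norm_fderiv_le_of_lipschitz ℝ hf

theorem lipschitzWith_const_mul_norm_sub {E : Type*} [SeminormedAddCommGroup E] (a : ℝ) (x : E) :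
    LipschitzWith ‖a‖₊ fun w => a * ‖x - w‖ :=
  LipschitzWith.of_dist_le_mul fun v w => calc
    dist (a * ‖x - v‖) (a * ‖x - w‖) = |a| * |‖x - v‖ - ‖x - w‖| := by
      rw [Real.dist_eq, ← mul_sub, abs_mul]
    _ ≤ |a| * ‖(x - v) - (x - w)‖ := by gcongr; exact abs_norm_sub_norm_le _ _
    _ = ‖a‖₊ * dist v w := by
      rw [sub_sub_sub_cancel_left, dist_comm, dist_eq_norm, coe_nnnorm, Real.norm_eq_abs]

theorem hasDerivAt_log_exp_add {A : ℝ} (hA : 0 ≤ A) (t : ℝ) :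
    HasDerivAt (fun t => log (exp t + A)) (exp t / (exp t + A)) t :=
  ((hasDerivAt_exp t).add_const A).log (by positivity)

theorem lipschitzWith_log_exp_add_sub_mul {A ε : ℝ} (hA : 0 ≤ A) (hε₀ : 0 ≤ ε) (hε₁ : ε ≤ 1) :
    LipschitzWith 1 fun t => log (exp t + A) - ε * t := by
  have hderiv (t : ℝ) : HasDerivAt (fun t => log (exp t + A) - ε * t)
      (exp t / (exp t + A) - ε) t :=
    ((hasDerivAt_log_exp_add hA t).sub ((hasDerivAt_id' t).const_mul ε)).congr_deriv (by ring)
  refine lipschitzWith_of_nnnorm_deriv_le (fun t => (hderiv t).differentiableAt) fun t => ?_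
  have hσ₀ : 0 ≤ exp t / (exp t + A) := by positivity
  have hσ₁ : exp t / (exp t + A) ≤ 1 := div_le_one_of_le₀ (by linarith) (by positivity)
  rw [(hderiv t).deriv, ← NNReal.coe_le_coe, coe_nnnorm, Real.norm_eq_abs, NNReal.coe_one,
    abs_sub_le_iff]
  constructor <;> linarith

theorem neg_log_exp_div_sum_exp {ι : Type*} [Fintype ι] (u : ι → ℝ) (y : ι) :
    -log (exp (u y) / ∑ i, exp (u i)) = log (∑ i, exp (u i)) - u y := by
  have hpos : 0 < ∑ i, exp (u i) := sum_pos (fun i _ => exp_pos _) ⟨y, mem_univ y⟩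
  rw [log_div (exp_ne_zero _) hpos.ne', log_exp, neg_sub]

theorem lipschitzWith_neg_log_softmax_update {ι : Type*} [Fintype ι] [DecidableEq ι]
    (s : ι → ℝ) (y z : ι) :
    LipschitzWith 1 fun t => -log (exp (update s z t y) / ∑ i, exp (update s z t i)) := by
  set A := ∑ i ∈ univ \ {z}, exp (s i)
  have hA : 0 ≤ A := sum_nonneg fun i _ => (exp_pos _).le
  have hloss : (fun t => -log (exp (update s z t y) / ∑ i, exp (update s z t i))) =
      fun t => log (exp t + A) - update s z t y := by
    funext t
    rw [neg_log_exp_div_sum_exp, sum_congr rfl fun i _ => apply_update (fun _ => exp) s z t i,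
      sum_update_of_mem (mem_univ z)]
  rw [hloss]
  rcases eq_or_ne y z with rfl | hyz
  · simpa only [update_self, one_mul] using lipschitzWith_log_exp_add_sub_mul hA zero_le_one le_rfl
  · simpa only [update_of_ne hyz, zero_mul, sub_zero, add_zero] using
      (lipschitzWith_log_exp_add_sub_mul hA le_rfl zero_le_one).sub (LipschitzWith.const (s y))

theorem prototype_gradient_norm_bounded_general
    (d K : ℕ)
    (x : EuclideanSpace ℝ (Fin d)) (c : Fin K → EuclideanSpace ℝ (Fin d))
    (y : Fin K)
    (z : Fin K) :
    ‖gradient (fun w : EuclideanSpace ℝ (Fin d) =>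
        -Real.log (Real.exp (-(1 / 2) * ‖x - Function.update c z w y‖) /
          ∑ z', Real.exp (-(1 / 2) * ‖x - Function.update c z w z'‖))) (c z)‖
      ≤ 1 / 2 := by
  set logit : EuclideanSpace ℝ (Fin d) → ℝ := fun w => -(1 / 2) * ‖x - w‖
  have hloss : (fun w => -log (exp (logit (update c z w y)) /
      ∑ z', exp (logit (update c z w z')))) =
      (fun t => -log (exp (update (logit ∘ c) z t y) / ∑ z', exp (update (logit ∘ c) z t z'))) ∘
        logit := by
    funext w
    simp only [comp_apply, apply_update (fun _ => logit)]
    rfl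
  have hlip := (lipschitzWith_neg_log_softmax_update (logit ∘ c) y z).comp
    (lipschitzWith_const_mul_norm_sub (-(1 / 2)) x)
  rw [← hloss] at hlip
  refine (norm_gradient_le_of_lipschitzWith hlip (c z)).trans_eq ?_
  norm_num

/-- For the Euclidean-distance prototype classifier, for every class `z`
the Euclidean norm of the gradient of the NLL loss `L_{xy}` with respect to `c_z` is at
most `½`; in particular (since `x` is universally quantified) the gradient norm is
uniformly bounded over all samples `x ∈ ℝ^d` (robustness to outliers). -/
theorem prototype_gradient_norm_bounded
    (d K : ℕ) (hd : 0 < d) (hK : 0 < K)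
    (x : EuclideanSpace ℝ (Fin d)) (c : Fin K → EuclideanSpace ℝ (Fin d))
    (hx : ∀ z, x ≠ c z) (y : Fin K)
    (p : Fin K → ℝ)
    (hp : ∀ z, p z =
      Real.exp (-(1 / 2) * ‖x - c z‖) / ∑ z', Real.exp (-(1 / 2) * ‖x - c z'‖))
    (z : Fin K) :
    ‖gradient (fun w : EuclideanSpace ℝ (Fin d) =>
        -Real.log (Real.exp (-(1 / 2) * ‖x - Function.update c z w y‖) /
          ∑ z', Real.exp (-(1 / 2) * ‖x - Function.update c z w z'‖))) (c z)‖
      ≤ 1 / 2 :=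
  prototype_gradient_norm_bounded_general d K x c y z
end
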